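/- (Lemma 3.5, key inequality of descent.) Suppose each s_i has L_i-Lipschitz continuous gradient. Let (d*, z*) be a fixed point of the NIDS iteration with d* ∈ range(I − W), and let (d^{k+1}, z^{k+1}) be obtained from (d^k, z^k) by one NIDS iteration, where d^k ∈ range(I − W). Then ‖z^{k+1} − z*‖²_{Λ⁻¹} + ‖d^{k+1} − d*‖²_M ≤ ‖z^k − z*‖²_{Λ⁻¹} + ‖d^k − d*‖²_M − (1 − max_i α_i L_i / 2) · ( ‖z^k − z^{k+1}‖²_{Λ⁻¹} + ‖d^k − d^{k+1}‖²_M ). -/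

import Mathlib

open Matrix Filter Topology

noncomputable section

/-- Trace inner product `⟨x, y⟩ = tr(xᵀ y)` on `n × p` real matrices. -/
def iprod {n p : ℕ} (x y : Matrix (Fin n) (Fin p) ℝ) : ℝ := (xᵀ * y).trace

/-- Weighted inner product `⟨x, y⟩_Q = tr(xᵀ Q y)`. -/
def iprodQ {n p : ℕ} (Q : Matrix (Fin n) (Fin n) ℝ) (x y : Matrix (Fin n) (Fin p) ℝ) : ℝ :=
  (xᵀ * Q * y).trace

/-- Weighted squared (semi)norm `‖x‖_Q² = tr(xᵀ Q x)`. -/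
def nsq {n p : ℕ} (Q : Matrix (Fin n) (Fin n) ℝ) (x : Matrix (Fin n) (Fin p) ℝ) : ℝ :=
  iprodQ Q x x

/-- `∇s(x)`: the matrix whose `i`-th row is the gradient field `g i` applied to the `i`-th
row of `x`. -/
def gradS {n p : ℕ} (g : Fin n → EuclideanSpace ℝ (Fin p) → EuclideanSpace ℝ (Fin p))
    (x : Matrix (Fin n) (Fin p) ℝ) : Matrix (Fin n) (Fin p) ℝ :=
  Matrix.of fun i => WithLp.equiv 2 (Fin p → ℝ) (g i ((WithLp.equiv 2 (Fin p → ℝ)).symm (x i)))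

/-- `x ∈ range(A)`, i.e. `x = A y` for some `y ∈ ℝ^{n×p}`. -/
def InRange {n p : ℕ} (A : Matrix (Fin n) (Fin n) ℝ) (x : Matrix (Fin n) (Fin p) ℝ) : Prop :=
  ∃ y : Matrix (Fin n) (Fin p) ℝ, x = A * y

/-- `B` is the Moore–Penrose pseudoinverse of `A`. -/
def IsMoorePenrose {n : ℕ} (A B : Matrix (Fin n) (Fin n) ℝ) : Prop :=
  A * B * A = A ∧ B * A * B = B ∧ (A * B)ᵀ = A * B ∧ (B * A)ᵀ = B * A

/-- `r(x) = Σᵢ rᵢ(xᵢ)` where `xᵢ` is the `i`-th row of `x`. -/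
def rsum {n p : ℕ} (r : Fin n → (Fin p → ℝ) → ℝ) (x : Matrix (Fin n) (Fin p) ℝ) : ℝ :=
  ∑ i, r i (x i)

/-- `q ∈ ∂r(x)`: subgradient of `rsum r` at `x` w.r.t. the trace inner product. -/
def IsSubgrad {n p : ℕ} (r : Fin n → (Fin p → ℝ) → ℝ) (x q : Matrix (Fin n) (Fin p) ℝ) : Prop :=
  ∀ y : Matrix (Fin n) (Fin p) ℝ, rsum r x + iprod q (y - x) ≤ rsum r y

/-- `t` is an eigenvalue of the real matrix `A`. -/
def IsEig {n : ℕ} (A : Matrix (Fin n) (Fin n) ℝ) (t : ℝ) : Prop :=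
  ∃ v : Fin n → ℝ, v ≠ 0 ∧ A *ᵥ v = t • v

/-- The mixing matrix assumption: symmetry, null space of `I - W` is the span of the
all-ones vector, and `2I ≽ W + I ≻ 0`. -/
def IsMixing {n : ℕ} (W : Matrix (Fin n) (Fin n) ℝ) : Prop :=
  Wᵀ = W ∧ (∀ v : Fin n → ℝ, (1 - W) *ᵥ v = 0 ↔ ∃ t : ℝ, v = fun _ => t) ∧
    (W + 1).PosDef ∧ ((2 : ℝ) • (1 : Matrix (Fin n) (Fin n) ℝ) - (W + 1)).PosSemidef

/-- `x` is a minimizer over `ℝ^{n×p}` of `u ↦ r(u) + ½‖u − z‖²_{Λ⁻¹}` where `Λ = diag α`. -/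
def ProxMin {n p : ℕ} (r : Fin n → (Fin p → ℝ) → ℝ) (α : Fin n → ℝ)
    (z x : Matrix (Fin n) (Fin p) ℝ) : Prop :=
  ∀ u : Matrix (Fin n) (Fin p) ℝ,
    rsum r x + 1 / 2 * nsq (Matrix.diagonal fun i => (α i)⁻¹) (x - z) ≤
      rsum r u + 1 / 2 * nsq (Matrix.diagonal fun i => (α i)⁻¹) (u - z)

/-- `(d, z)` is a fixed point of the NIDS iteration. -/
def NIDSFixed {n p : ℕ} (W : Matrix (Fin n) (Fin n) ℝ) (α : Fin n → ℝ) (c : ℝ)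
    (g : Fin n → EuclideanSpace ℝ (Fin p) → EuclideanSpace ℝ (Fin p))
    (r : Fin n → (Fin p → ℝ) → ℝ) (d z : Matrix (Fin n) (Fin p) ℝ) : Prop :=
  ∃ x : Matrix (Fin n) (Fin p) ℝ, ProxMin r α z x ∧
    d = d + c • ((1 - W) *
      ((2 : ℝ) • x - z - Matrix.diagonal α * gradS g x - Matrix.diagonal α * d)) ∧
    z = x - Matrix.diagonal α * gradS g x - Matrix.diagonal α * d

end

/-!
Write `Δz = zᵏ - zᵏ⁺¹`, `Δd = dᵏ - dᵏ⁺¹` and `κ = maxᵢ αᵢLᵢ`. Splitting `zᵏ - z* = (zᵏ⁺¹ - z*) + Δz`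
and `dᵏ - d* = (dᵏ⁺¹ - d*) + Δd`, the inequality becomes
`0 ≤ 2 (⟨zᵏ⁺¹ - z*, Δz⟩_{Λ⁻¹} + ⟨dᵏ⁺¹ - d*, Δd⟩_M) + κ/2 (‖Δz‖²_{Λ⁻¹} + ‖Δd‖²_M)`.
Since `B(I - W)` is the identity on `range(I - W)`, the update rules turn the cross term into
`⟨Λ⁻¹((zᵏ - xᵏ) - (z* - x*)), xᵏ - x*⟩ + ⟨∇s(xᵏ) - ∇s(x*), xᵏ - x* - Δz⟩`.
The first summand is nonnegative by monotonicity of `∂r` (the prox optimality condition), the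
second is at least `-κ/4 ‖Δz‖²_{Λ⁻¹}` by cocoercivity of each `∇sᵢ` (Baillon–Haddad) and Young's
inequality, and `‖Δd‖²_M ≥ 0` because `Δd ∈ range(I - W)`, on which `M` is positive semidefinite
by the step-size condition `c Λ^{1/2} (I - W) Λ^{1/2} ≺ I`.
-/

open Finset InnerProductSpace AffineMap

theorem neg_le_inner_sub_of_sq_norm_div_le {E : Type*} [NormedAddCommGroup E]
    [InnerProductSpace ℝ E] {G X : E} {L : ℝ} (hL : 0 < L) (h : ‖G‖ ^ 2 / L ≤ ⟪G, X⟫_ℝ)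
    (Z : E) : -(L / 4 * ‖Z‖ ^ 2) ≤ ⟪G, X - Z⟫_ℝ := by
  have hsq : 0 ≤ ‖G - (L / 2) • Z‖ ^ 2 := sq_nonneg _
  rw [norm_sub_sq_real, real_inner_smul_right, norm_smul, Real.norm_of_nonneg (by positivity)]
    at hsq
  have hZ : ⟪G, Z⟫_ℝ - L / 4 * ‖Z‖ ^ 2 ≤ ‖G‖ ^ 2 / L := by
    rw [le_div_iff₀ hL]
    nlinarith
  rw [inner_sub_right]
  linarith

section Gradient

variable {E : Type*} [NormedAddCommGroup E] [InnerProductSpace ℝ E] [CompleteSpace E]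
  {s : E → ℝ} {g : E → E} {L : ℝ}

theorem HasGradientAt.hasDerivAt_comp_lineMap {x y g' : E} {t : ℝ}
    (h : HasGradientAt s g' (lineMap x y t)) :
    HasDerivAt (s ∘ (lineMap x y : ℝ → E)) ⟪g', y - x⟫_ℝ t := by
  simpa using h.hasFDerivAt.comp_hasDerivAt t hasDerivAt_lineMap

theorem ConvexOn.add_inner_le_of_hasGradientAt (hs : ConvexOn ℝ Set.univ s) {x g' : E}
    (hg : HasGradientAt s g' x) (u : E) : s x + ⟪g', u - x⟫_ℝ ≤ s u := by
  have hline : ConvexOn ℝ Set.univ (s ∘ (lineMap x u : ℝ → E)) := by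
    simpa using hs.comp_affineMap (lineMap x u)
  have hderiv : HasDerivAt (s ∘ (lineMap x u : ℝ → E)) ⟪g', u - x⟫_ℝ 0 :=
    HasGradientAt.hasDerivAt_comp_lineMap (by simpa using hg)
  have := hline.le_slope_of_hasDerivAt (Set.mem_univ 0) (Set.mem_univ 1) zero_lt_one hderiv
  simp [slope_def_field] at this
  linarith

theorem le_add_inner_add_of_lipschitz_gradient (hg : ∀ v, HasGradientAt s (g v) v)
    (hlip : ∀ v w, ‖g v - g w‖ ≤ L * ‖v - w‖) (x y : E) :
    s y ≤ s x + ⟪g x, y - x⟫_ℝ + L / 2 * ‖y - x‖ ^ 2 := by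
  set a := ⟪g x, y - x⟫_ℝ
  set b := L / 2 * ‖y - x‖ ^ 2
  set F : ℝ → ℝ := fun t => s (lineMap x y t) - t * a - t ^ 2 * b
  have hF : ∀ t, HasDerivAt F (⟪g (lineMap x y t) - g x, y - x⟫_ℝ - 2 * t * b) t := by
    intro t
    refine ((((hg (lineMap x y t)).hasDerivAt_comp_lineMap).sub
      ((hasDerivAt_id t).mul_const a)).sub ((hasDerivAt_pow 2 t).mul_const b)).congr_deriv ?_
    simp only [inner_sub_left, a]
    ring
  have hslope : ∀ t ∈ interior (Set.Icc (0 : ℝ) 1),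
      ⟪g (lineMap x y t) - g x, y - x⟫_ℝ - 2 * t * b ≤ 0 := by
    intro t ht
    rw [interior_Icc] at ht
    refine sub_nonpos.2 ?_
    have hdist : ‖lineMap x y t - x‖ = t * ‖y - x‖ := by
      rw [← vsub_eq_sub, lineMap_vsub_left, vsub_eq_sub, norm_smul, Real.norm_of_nonneg ht.1.le]
    calc ⟪g (lineMap x y t) - g x, y - x⟫_ℝ
        ≤ ‖g (lineMap x y t) - g x‖ * ‖y - x‖ := real_inner_le_norm _ _
      _ ≤ L * (t * ‖y - x‖) * ‖y - x‖ := by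
        gcongr
        exact hdist ▸ hlip _ _
      _ = 2 * t * b := by ring
  have hanti : AntitoneOn F (Set.Icc 0 1) :=
    antitoneOn_of_hasDerivWithinAt_nonpos (convex_Icc 0 1)
      (HasDerivAt.continuousOn fun t _ => hF t) (fun t _ => (hF t).hasDerivWithinAt) hslope
  have := hanti (by simp) (by simp) zero_le_one
  simp [F] at this
  linarith

theorem ConvexOn.sq_norm_sub_div_le_inner_of_lipschitz_gradient (hs : ConvexOn ℝ Set.univ s)
    (hg : ∀ v, HasGradientAt s (g v) v) (hlip : ∀ v w, ‖g v - g w‖ ≤ L * ‖v - w‖) (hL : 0 < L)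
    (u w : E) : ‖g u - g w‖ ^ 2 / L ≤ ⟪g u - g w, u - w⟫_ℝ := by
  -- Apply the descent lemma at the gradient step `u - L⁻¹ (g u - g w)` and convexity at `w`.
  have half : ∀ u w : E, s w + ⟪g w, u - w⟫_ℝ + ‖g u - g w‖ ^ 2 / (2 * L) ≤ s u := by
    intro u w
    set δ := g u - g w
    have hdesc := le_add_inner_add_of_lipschitz_gradient hg hlip u (u - L⁻¹ • δ)
    have hconv := hs.add_inner_le_of_hasGradientAt (hg w) (u - L⁻¹ • δ)
    have hδ : ⟪g u, δ⟫_ℝ - ⟪g w, δ⟫_ℝ = ‖δ‖ ^ 2 := by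
      rw [← inner_sub_left, real_inner_self_eq_norm_sq]
    simp only [sub_sub_cancel_left, inner_neg_right, norm_neg, norm_smul, inner_sub_right,
      real_inner_smul_right, Real.norm_of_nonneg (inv_nonneg.2 hL.le)] at hdesc hconv
    have hquad : L / 2 * (L⁻¹ * ‖δ‖) ^ 2 = ‖δ‖ ^ 2 / (2 * L) := by
      field_simp
    have hstep : L⁻¹ * ⟪g u, δ⟫_ℝ - L⁻¹ * ⟪g w, δ⟫_ℝ = 2 * (‖δ‖ ^ 2 / (2 * L)) := by
      rw [← mul_sub, hδ]
      field_simp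
    rw [inner_sub_right]
    linarith
  have h₁ := half u w
  have h₂ := half w u
  rw [norm_sub_rev] at h₂
  have hsum : ⟪g w, u - w⟫_ℝ + ⟪g u, w - u⟫_ℝ = -⟪g u - g w, u - w⟫_ℝ := by
    rw [← neg_sub u w, inner_neg_right, inner_sub_left]; ring
  have hhalf : ‖g u - g w‖ ^ 2 / (2 * L) + ‖g u - g w‖ ^ 2 / (2 * L) = ‖g u - g w‖ ^ 2 / L := by
    field_simp; ring
  linarith

end Gradient

section Frobenius

variable {n p : ℕ}

theorem iprod_eq_sum (x y : Matrix (Fin n) (Fin p) ℝ) : iprod x y = ∑ i, ∑ j, x i j * y i j := by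
  simp only [iprod, trace, diag_apply, mul_apply, transpose_apply]
  exact sum_comm

theorem iprod_eq_sum_inner (x y : Matrix (Fin n) (Fin p) ℝ) :
    iprod x y = ∑ i, ⟪WithLp.toLp 2 (x i), WithLp.toLp 2 (y i)⟫_ℝ := by
  simp [iprod_eq_sum, EuclideanSpace.inner_toLp_toLp, dotProduct, mul_comm]

theorem iprod_sub_right (x y z : Matrix (Fin n) (Fin p) ℝ) :
    iprod x (y - z) = iprod x y - iprod x z := by
  simp only [iprod_eq_sum, Matrix.sub_apply, mul_sub, sum_sub_distrib]

theorem iprod_sub_left (x y z : Matrix (Fin n) (Fin p) ℝ) :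
    iprod (x - y) z = iprod x z - iprod y z := by
  simp only [iprod_eq_sum, Matrix.sub_apply, sub_mul, sum_sub_distrib]

theorem iprod_neg_left (x y : Matrix (Fin n) (Fin p) ℝ) : iprod (-x) y = -iprod x y := by
  simp only [iprod_eq_sum, Matrix.neg_apply, neg_mul, sum_neg_distrib]

theorem iprod_smul_right (t : ℝ) (x y : Matrix (Fin n) (Fin p) ℝ) :
    iprod x (t • y) = t * iprod x y := by
  simp only [iprod_eq_sum, Matrix.smul_apply, smul_eq_mul, mul_sum, mul_left_comm]

theorem iprod_mul_left (N : Matrix (Fin n) (Fin n) ℝ) (x y : Matrix (Fin n) (Fin p) ℝ) :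
    iprod (N * x) y = iprod x (Nᵀ * y) := by
  rw [iprod, iprod, transpose_mul, Matrix.mul_assoc]

theorem iprodQ_eq_iprod (Q : Matrix (Fin n) (Fin n) ℝ) (x y : Matrix (Fin n) (Fin p) ℝ) :
    iprodQ Q x y = iprod x (Q * y) := by
  rw [iprodQ, iprod, Matrix.mul_assoc]

theorem nsq_add {Q : Matrix (Fin n) (Fin n) ℝ} (hQ : Qᵀ = Q) (x y : Matrix (Fin n) (Fin p) ℝ) :
    nsq Q (x + y) = nsq Q x + 2 * iprodQ Q x y + nsq Q y := by
  have hyx : iprod y (Q * x) = iprod x (Q * y) := by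
    rw [← hQ, ← iprod_mul_left, iprod_eq_sum, iprod_eq_sum, hQ]
    simp only [mul_comm]
  simp only [nsq, iprodQ_eq_iprod, Matrix.mul_add, iprod_eq_sum, Matrix.add_apply] at hyx ⊢
  simp only [add_mul, mul_add, sum_add_distrib, hyx]
  ring

theorem nsq_smul (Q : Matrix (Fin n) (Fin n) ℝ) (t : ℝ) (x : Matrix (Fin n) (Fin p) ℝ) :
    nsq Q (t • x) = t ^ 2 * nsq Q x := by
  simp only [nsq, iprodQ_eq_iprod, Matrix.mul_smul, iprod_eq_sum, Matrix.smul_apply,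
    smul_eq_mul, mul_sum]
  exact sum_congr rfl fun i _ => sum_congr rfl fun j _ => by ring

theorem nsq_diagonal (w : Fin n → ℝ) (x : Matrix (Fin n) (Fin p) ℝ) :
    nsq (diagonal w) x = ∑ i, w i * ‖WithLp.toLp 2 (x i)‖ ^ 2 := by
  simp only [nsq, iprodQ_eq_iprod, iprod_eq_sum_inner, ← real_inner_self_eq_norm_sq]
  refine sum_congr rfl fun i _ => ?_
  rw [← real_inner_smul_right]
  congr 2
  ext j
  simp [diagonal_mul]

theorem Matrix.PosSemidef.nsq_nonneg {Q : Matrix (Fin n) (Fin n) ℝ} (hQ : Q.PosSemidef)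
    (x : Matrix (Fin n) (Fin p) ℝ) : 0 ≤ nsq Q x := by
  simpa [nsq, iprodQ] using (hQ.conjTranspose_mul_mul_same x).trace_nonneg

end Frobenius

section PseudoInverse

variable {n p : ℕ} {A B : Matrix (Fin n) (Fin n) ℝ}

theorem IsMoorePenrose.transpose_eq (hB : IsMoorePenrose A B) (hA : Aᵀ = A) : Bᵀ = B := by
  obtain ⟨hABA, hBAB, hAB, hBA⟩ := hB
  have hAB' : A * B = Bᵀ * A := by rw [← hAB, transpose_mul, hA]
  have hBA' : B * A = A * Bᵀ := by rw [← hBA, transpose_mul, hA]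
  have h₁ : B = B * Bᵀ * A := by
    rw [Matrix.mul_assoc, ← hAB', ← Matrix.mul_assoc, hBAB]
  have h₂ : B = B * A * Bᵀ := by
    calc B = B * Bᵀ * (A * B * A) := by rw [hABA, ← h₁]
      _ = B * (B * A) := by
        rw [← Matrix.mul_assoc, ← Matrix.mul_assoc, ← h₁, Matrix.mul_assoc]
      _ = B * (A * Bᵀ) := by rw [hBA']
      _ = B * A * Bᵀ := (Matrix.mul_assoc _ _ _).symm
  calc Bᵀ = (B * A * Bᵀ)ᵀ := by rw [← h₂]
    _ = B := by
      rw [transpose_mul, transpose_mul, transpose_transpose, hA, ← Matrix.mul_assoc, ← h₂]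

theorem IsMoorePenrose.mul_mul_of_inRange (hB : IsMoorePenrose A B) (hA : Aᵀ = A)
    {x : Matrix (Fin n) (Fin p) ℝ} (hx : InRange A x) : B * A * x = x := by
  obtain ⟨hABA, -, -, hBA⟩ := hB
  obtain ⟨y, rfl⟩ := hx
  have hBAA : B * A * A = A := by
    simpa [transpose_mul, hA, hBA, Matrix.mul_assoc] using congrArg transpose hABA
  rw [← Matrix.mul_assoc, hBAA]

theorem IsMoorePenrose.iprod_mul_mul_of_inRange (hB : IsMoorePenrose A B) (hA : Aᵀ = A)
    {x : Matrix (Fin n) (Fin p) ℝ} (hx : InRange A x) (v : Matrix (Fin n) (Fin p) ℝ) :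
    iprod x (B * (A * v)) = iprod x v := by
  rw [← Matrix.mul_assoc, ← hB.2.2.2, ← iprod_mul_left, hB.mul_mul_of_inRange hA hx]

end PseudoInverse

open scoped MatrixOrder in
theorem Matrix.PosSemidef.sub_smul_mul_self {m : Type*} [Fintype m] [DecidableEq m]
    {T : Matrix m m ℝ} {c : ℝ} (hT : T.PosSemidef) (h : (1 - c • T).PosSemidef) :
    (T - c • (T * T)).PosSemidef := by
  have hcomm : Commute T (1 - c • T) := by
    simp [Commute, SemiconjBy, Matrix.mul_sub, Matrix.sub_mul]
  rw [← Matrix.nonneg_iff_posSemidef]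
  simpa [Matrix.mul_sub] using hcomm.mul_nonneg hT.nonneg h.nonneg

theorem posSemidef_sub_smul_mul_diagonal_mul {m : Type*} [Fintype m] [DecidableEq m]
    {A : Matrix m m ℝ} {α : m → ℝ} {c : ℝ} (hα : ∀ i, 0 < α i) (hA : A.PosSemidef)
    (hcA : (1 - c • ((diagonal fun i => √(α i)) * A * diagonal fun i => √(α i))).PosSemidef) :
    (A - c • (A * diagonal α * A)).PosSemidef := by
  set S : Matrix m m ℝ := diagonal fun i => √(α i)
  have hS : star S = S := by simp [S, star_eq_conjTranspose]
  have hSS : S * S = diagonal α := by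
    simp [S, diagonal_mul_diagonal, Real.mul_self_sqrt (hα _).le]
  have hSunit : IsUnit S := by
    simp [S, isUnit_diagonal, Pi.isUnit_iff, (Real.sqrt_pos.2 (hα _)).ne']
  have hconj : star S * (A - c • (A * diagonal α * A)) * S =
      S * A * S - c • (S * A * S * (S * A * S)) := by
    simp only [hS, Matrix.mul_sub, Matrix.sub_mul, Matrix.mul_smul, Matrix.smul_mul,
      Matrix.mul_assoc]
    rw [← Matrix.mul_assoc S S, hSS]
  rw [← hSunit.posSemidef_star_left_conjugate_iff, hconj]
  have hT := hA.conjTranspose_mul_mul_same S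
  rw [← star_eq_conjTranspose, hS] at hT
  exact hT.sub_smul_mul_self hcA

theorem nsq_inv_smul_sub_diagonal_nonneg {n p : ℕ} {A B : Matrix (Fin n) (Fin n) ℝ}
    {α : Fin n → ℝ} {c : ℝ} (hB : IsMoorePenrose A B) (hA : Aᵀ = A) (hApsd : A.PosSemidef)
    (hα : ∀ i, 0 < α i) (hc : 0 < c)
    (hcA : (1 - c • ((diagonal fun i => √(α i)) * A * diagonal fun i => √(α i))).PosSemidef)
    {x : Matrix (Fin n) (Fin p) ℝ} (hx : InRange A x) :
    0 ≤ nsq (c⁻¹ • B - diagonal α) x := by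
  have hQ := posSemidef_sub_smul_mul_diagonal_mul hα hApsd hcA
  have hBx := hB.iprod_mul_mul_of_inRange hA hx
  obtain ⟨w, rfl⟩ := hx
  have key : nsq (c⁻¹ • B - diagonal α) (A * w) =
      c⁻¹ * nsq (A - c • (A * diagonal α * A)) w := by
    simp only [nsq, iprodQ_eq_iprod, Matrix.sub_mul, Matrix.smul_mul, iprod_sub_right,
      iprod_smul_right, hBx, iprod_mul_left, hA, Matrix.mul_assoc]
    field_simp
  rw [key]
  exact mul_nonneg (inv_nonneg.2 hc.le) (hQ.nsq_nonneg w)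

section Prox

theorem le_of_forall_le_add_mul {a b C : ℝ} (h : ∀ t ∈ Set.Ioc (0 : ℝ) 1, a ≤ b + t * C) :
    a ≤ b := by
  have hlim : Tendsto (fun t => b + t * C) (𝓝[>] 0) (𝓝 b) :=
    ((continuous_const.add (continuous_id.mul continuous_const)).tendsto' 0 b (by simp)).mono_left
      nhdsWithin_le_nhds
  exact ge_of_tendsto hlim (eventually_of_mem (Ioc_mem_nhdsGT zero_lt_one) h)

theorem ConvexOn.le_add_of_forall_le_add_sq {E : Type*} [AddCommGroup E] [Module ℝ E]
    {f : E → ℝ} (hf : ConvexOn ℝ Set.univ f) {x u : E} {a C : ℝ}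
    (h : ∀ t ∈ Set.Ioc (0 : ℝ) 1, f x ≤ f (x + t • (u - x)) + t * a + t ^ 2 * C) :
    f x ≤ f u + a := by
  refine le_of_forall_le_add_mul (C := C) fun t ht => ?_
  have hconv : f (x + t • (u - x)) ≤ (1 - t) * f x + t * f u := by
    have := hf.2 (Set.mem_univ x) (Set.mem_univ u) (sub_nonneg.2 ht.2) ht.1.le (by ring)
    simpa [smul_sub, sub_smul, add_sub, add_sub_right_comm] using this
  have : t * f x ≤ t * (f u + a + t * C) := by nlinarith [h t ht]
  exact le_of_mul_le_mul_left this ht.1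

variable {n p : ℕ} {r : Fin n → (Fin p → ℝ) → ℝ}

theorem convexOn_rsum (hr : ∀ i, ConvexOn ℝ Set.univ (r i)) :
    ConvexOn ℝ Set.univ (rsum r) := by
  refine ⟨convex_univ, fun x _ y _ a b ha hb hab => ?_⟩
  simp only [rsum, smul_eq_mul, Finset.mul_sum, ← Finset.sum_add_distrib]
  exact Finset.sum_le_sum fun i _ =>
    (hr i).2 (Set.mem_univ (x i)) (Set.mem_univ (y i)) ha hb hab

theorem ProxMin.isSubgrad {α : Fin n → ℝ} (hr : ∀ i, ConvexOn ℝ Set.univ (r i))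
    {z x : Matrix (Fin n) (Fin p) ℝ} (hx : ProxMin r α z x) :
    IsSubgrad r x (diagonal (fun i => (α i)⁻¹) * (z - x)) := by
  intro u
  set P : Matrix (Fin n) (Fin n) ℝ := diagonal fun i => (α i)⁻¹
  have hP : Pᵀ = P := diagonal_transpose _
  have hcross : iprodQ P (x - z) (u - x) = -iprod (P * (z - x)) (u - x) := by
    rw [iprodQ_eq_iprod, ← hP, ← iprod_mul_left, hP, ← neg_sub z x, Matrix.mul_neg,
      iprod_neg_left]
  have hquad : ∀ t ∈ Set.Ioc (0 : ℝ) 1, rsum r x ≤ rsum r (x + t • (u - x)) +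
      t * -iprod (P * (z - x)) (u - x) + t ^ 2 * (1 / 2 * nsq P (u - x)) := by
    intro t _
    have hmin := hx (x + t • (u - x))
    rw [show x + t • (u - x) - z = (x - z) + t • (u - x) by abel, nsq_add hP, nsq_smul,
      iprodQ_eq_iprod, Matrix.mul_smul, iprod_smul_right, ← iprodQ_eq_iprod, hcross] at hmin
    linarith
  linarith [(convexOn_rsum hr).le_add_of_forall_le_add_sq hquad]

theorem IsSubgrad.iprod_sub_nonneg {x y q q' : Matrix (Fin n) (Fin p) ℝ}
    (hq : IsSubgrad r x q) (hq' : IsSubgrad r y q') : 0 ≤ iprod (q - q') (x - y) := by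
  have h₁ := hq y
  have h₂ := hq' x
  simp only [iprod_sub_left, iprod_sub_right] at h₁ h₂ ⊢
  linarith

end Prox

theorem neg_le_iprod_gradS_sub {n p : ℕ} {s : Fin n → EuclideanSpace ℝ (Fin p) → ℝ}
    {g : Fin n → EuclideanSpace ℝ (Fin p) → EuclideanSpace ℝ (Fin p)} {L α : Fin n → ℝ} {κ : ℝ}
    (hα : ∀ i, 0 < α i) (hL : ∀ i, 0 < L i) (hs : ∀ i, ConvexOn ℝ Set.univ (s i))
    (hg : ∀ i v, HasGradientAt (s i) (g i v) v)
    (hlip : ∀ i (v w : EuclideanSpace ℝ (Fin p)), ‖g i v - g i w‖ ≤ L i * ‖v - w‖)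
    (hκ : ∀ i, α i * L i ≤ κ) (x y z : Matrix (Fin n) (Fin p) ℝ) :
    -(κ / 4 * nsq (diagonal fun i => (α i)⁻¹) z) ≤ iprod (gradS g x - gradS g y) (x - y - z) := by
  rw [nsq_diagonal, iprod_eq_sum_inner, Finset.mul_sum, ← Finset.sum_neg_distrib]
  refine Finset.sum_le_sum fun i _ => ?_
  set u := WithLp.toLp 2 (x i)
  set v := WithLp.toLp 2 (y i)
  set w := WithLp.toLp 2 (z i)
  have hrow : WithLp.toLp 2 ((gradS g x - gradS g y) i) = g i u - g i v := rfl
  have hrow' : WithLp.toLp 2 ((x - y - z) i) = u - v - w := rfl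
  have hcoco := (hs i).sq_norm_sub_div_le_inner_of_lipschitz_gradient (hg i) (hlip i) (hL i) u v
  have hLκ : L i ≤ κ * (α i)⁻¹ := by
    rw [le_mul_inv_iff₀ (hα i)]
    linarith [hκ i]
  calc -(κ / 4 * ((α i)⁻¹ * ‖w‖ ^ 2)) ≤ -(L i / 4 * ‖w‖ ^ 2) := by
        nlinarith [sq_nonneg ‖w‖]
    _ ≤ _ := hrow ▸ hrow' ▸ neg_le_inner_sub_of_sq_norm_div_le (hL i) hcoco w

section Iteration

variable {n p : ℕ} {A B Λ : Matrix (Fin n) (Fin n) ℝ} {c : ℝ}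
  {dk zk xk gk dk1 zk1 dstar zstar xstar gstar : Matrix (Fin n) (Fin p) ℝ}

theorem iprodQ_inv_smul_sub_eq (hc : c ≠ 0) (hB : IsMoorePenrose A B) (hA : Aᵀ = A)
    (hdu : dk1 = dk + c • (A * ((2 : ℝ) • xk - zk - Λ * gk - Λ * dk)))
    (hzu : zk1 = xk - Λ * gk - Λ * dk1) (hdk : InRange A dk)
    (hfix1 : dstar = dstar + c • (A * ((2 : ℝ) • xstar - zstar - Λ * gstar - Λ * dstar)))
    (hfix2 : zstar = xstar - Λ * gstar - Λ * dstar) (hdstar : InRange A dstar) :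
    iprodQ (c⁻¹ • B - Λ) (dk1 - dstar) (dk - dk1) =
      iprod (dk1 - dstar) (zk - xk - (zstar - xstar) - (zk1 - zstar)) := by
  set ak := (2 : ℝ) • xk - zk - Λ * gk - Λ * dk with hak
  set astar := (2 : ℝ) • xstar - zstar - Λ * gstar - Λ * dstar with hastar
  clear_value ak astar
  have hAastar : A * astar = 0 := by
    simpa [hc] using hfix1
  have hDd : dk - dk1 = c • (A * (astar - ak)) := by
    rw [hdu, Matrix.mul_sub, hAastar]
    module
  have hDp : InRange A (dk1 - dstar) := by
    obtain ⟨y, hy⟩ := hdk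
    obtain ⟨ystar, hystar⟩ := hdstar
    exact ⟨y + c • ak - ystar, by
      rw [hdu, hy, hystar, Matrix.mul_sub, Matrix.mul_add, Matrix.mul_smul]⟩
  have hgap : astar - ak - Λ * (dk - dk1) = zk - xk - (zstar - xstar) - (zk1 - zstar) := by
    rw [hak, hastar, Matrix.mul_sub]
    linear_combination (norm := module) hzu - hfix2
  calc iprodQ (c⁻¹ • B - Λ) (dk1 - dstar) (dk - dk1)
      = c⁻¹ * iprod (dk1 - dstar) (B * (dk - dk1)) - iprod (dk1 - dstar) (Λ * (dk - dk1)) := by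
        rw [iprodQ_eq_iprod, Matrix.sub_mul, Matrix.smul_mul, iprod_sub_right, iprod_smul_right]
    _ = iprod (dk1 - dstar) (astar - ak) - iprod (dk1 - dstar) (Λ * (dk - dk1)) := by
        rw [hDd, Matrix.mul_smul, iprod_smul_right, hB.iprod_mul_mul_of_inRange hA hDp,
          inv_mul_cancel_left₀ hc]
    _ = _ := by rw [← iprod_sub_right, hgap]

theorem nids_cross_term_eq {α : Fin n → ℝ} (hα : ∀ i, α i ≠ 0) (hc : c ≠ 0)
    (hB : IsMoorePenrose A B) (hA : Aᵀ = A)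
    (hdu : dk1 = dk + c • (A * ((2 : ℝ) • xk - zk - diagonal α * gk - diagonal α * dk)))
    (hzu : zk1 = xk - diagonal α * gk - diagonal α * dk1) (hdk : InRange A dk)
    (hfix1 : dstar = dstar + c • (A * ((2 : ℝ) • xstar - zstar - diagonal α * gstar -
      diagonal α * dstar)))
    (hfix2 : zstar = xstar - diagonal α * gstar - diagonal α * dstar) (hdstar : InRange A dstar) :
    iprodQ (diagonal fun i => (α i)⁻¹) (zk1 - zstar) (zk - zk1) +
        iprodQ (c⁻¹ • B - diagonal α) (dk1 - dstar) (dk - dk1) =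
      iprod ((diagonal fun i => (α i)⁻¹) * (zk - xk - (zstar - xstar))) (xk - xstar) +
        iprod (gk - gstar) (xk - xstar - (zk - zk1)) := by
  rw [iprodQ_inv_smul_sub_eq hc hB hA hdu hzu hdk hfix1 hfix2 hdstar]
  subst hzu hfix2
  simp only [iprodQ_eq_iprod, iprod_eq_sum, ← Finset.sum_add_distrib]
  refine Finset.sum_congr rfl fun i _ => Finset.sum_congr rfl fun j _ => ?_
  simp only [Matrix.sub_apply, diagonal_mul]
  field_simp [hα i]
  ring

end Iteration

/-- Lemma 3.5: a key inequality of descent. -/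
theorem nids_key_descent_inequality
    {n p : ℕ}
    (W : Matrix (Fin n) (Fin n) ℝ) (hW : IsMixing W)
    (α : Fin n → ℝ) (hα : ∀ i, 0 < α i) (c : ℝ) (hc : 0 < c)
    (hcW : ((1 : Matrix (Fin n) (Fin n) ℝ) -
      c • ((Matrix.diagonal fun i => Real.sqrt (α i)) * (1 - W) *
        Matrix.diagonal fun i => Real.sqrt (α i))).PosDef)
    (B : Matrix (Fin n) (Fin n) ℝ) (hB : IsMoorePenrose (1 - W) B)
    (L : Fin n → ℝ) (hL : ∀ i, 0 < L i)
    (s : Fin n → EuclideanSpace ℝ (Fin p) → ℝ)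
    (g : Fin n → EuclideanSpace ℝ (Fin p) → EuclideanSpace ℝ (Fin p))
    (hs : ∀ i, ConvexOn ℝ Set.univ (s i))
    (hg : ∀ i v, HasGradientAt (s i) (g i v) v)
    (hlip : ∀ i (v w : EuclideanSpace ℝ (Fin p)), ‖g i v - g i w‖ ≤ L i * ‖v - w‖)
    (r : Fin n → (Fin p → ℝ) → ℝ) (hr : ∀ i, ConvexOn ℝ Set.univ (r i))
    (dk zk xk dk1 zk1 : Matrix (Fin n) (Fin p) ℝ)
    (hxk : ProxMin r α zk xk)
    (hdu : dk1 = dk + c • ((1 - W) *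
      ((2 : ℝ) • xk - zk - Matrix.diagonal α * gradS g xk - Matrix.diagonal α * dk)))
    (hzu : zk1 = xk - Matrix.diagonal α * gradS g xk - Matrix.diagonal α * dk1)
    (hdk : InRange (1 - W) dk)
    (dstar zstar xstar : Matrix (Fin n) (Fin p) ℝ)
    (hxstar : ProxMin r α zstar xstar)
    (hfix1 : dstar = dstar + c • ((1 - W) * ((2 : ℝ) • xstar - zstar -
      Matrix.diagonal α * gradS g xstar - Matrix.diagonal α * dstar)))
    (hfix2 : zstar = xstar - Matrix.diagonal α * gradS g xstar - Matrix.diagonal α * dstar)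
    (hdstar : InRange (1 - W) dstar) :
    nsq (Matrix.diagonal fun i => (α i)⁻¹) (zk1 - zstar) +
        nsq (c⁻¹ • B - Matrix.diagonal α) (dk1 - dstar) ≤
      nsq (Matrix.diagonal fun i => (α i)⁻¹) (zk - zstar) +
        nsq (c⁻¹ • B - Matrix.diagonal α) (dk - dstar) -
        (1 - (⨆ i, α i * L i) / 2) *
          (nsq (Matrix.diagonal fun i => (α i)⁻¹) (zk - zk1) +
            nsq (c⁻¹ • B - Matrix.diagonal α) (dk - dk1)) := by
  obtain ⟨hWsymm, -, -, hWpsd⟩ := hW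
  have hA : (1 - W)ᵀ = 1 - W := by rw [transpose_sub, transpose_one, hWsymm]
  have hApsd : (1 - W).PosSemidef := by
    rwa [two_smul, add_comm W, add_sub_add_left_eq_sub] at hWpsd
  have hBsymm : Bᵀ = B := hB.transpose_eq hA
  set κ := ⨆ i, α i * L i
  have hκ : ∀ i, α i * L i ≤ κ := le_ciSup (Set.finite_range _).bddAbove
  have hκ0 : 0 ≤ κ := Real.iSup_nonneg fun i => (mul_pos (hα i) (hL i)).le
  have hprox :
      0 ≤ iprod ((diagonal fun i => (α i)⁻¹) * (zk - xk - (zstar - xstar))) (xk - xstar) := by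
    simpa [Matrix.mul_sub] using
      (hxk.isSubgrad hr).iprod_sub_nonneg (hxstar.isSubgrad hr)
  have hgrad := neg_le_iprod_gradS_sub hα hL hs hg hlip hκ xk xstar (zk - zk1)
  have hdual : 0 ≤ nsq (c⁻¹ • B - diagonal α) (dk - dk1) := by
    refine nsq_inv_smul_sub_diagonal_nonneg hB hA hApsd hα hc hcW.posSemidef
      ⟨-(c • ((2 : ℝ) • xk - zk - diagonal α * gradS g xk - diagonal α * dk)), ?_⟩
    rw [hdu, Matrix.mul_neg, Matrix.mul_smul]
    abel
  have hcross := nids_cross_term_eq (fun i => (hα i).ne') hc.ne' hB hA hdu hzu hdk hfix1 hfix2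
    hdstar
  rw [show zk - zstar = (zk1 - zstar) + (zk - zk1) by abel,
    show dk - dstar = (dk1 - dstar) + (dk - dk1) by abel,
    nsq_add (diagonal_transpose _),
    nsq_add (by rw [transpose_sub, transpose_smul, hBsymm, diagonal_transpose])]
  linarith [mul_nonneg hκ0 hdual]
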